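/- If B is a subspace of V such that R ∉ B, then B^⊥ ∩ (B^⊥)^⊥ = (B ∩ B^⊥) ⊕ span{R}; that is, the radical of the restriction of ω to the subspace W = B^⊥ is the internal direct sum of B ∩ B^⊥ and the line spanned by R. -/

import Mathlib

/-!
For a reflexive form on a finite-dimensional space, a dimension count upgrades
`N ⊔ ker ω ≤ N^⊥⊥` to an equality. Taking `N = B`, the radical `B^⊥ ∩ B^⊥⊥` of `ω` on `B^⊥`
is `B^⊥ ∩ (B + ker ω)`, which is `(B ∩ B^⊥) + ker ω` by the modular law since `ker ω ≤ B^⊥`.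
-/

/-- The ω-orthogonal complement of a subspace `A` of `V`:
`A^⊥ = {v ∈ V | ω(v,a) = 0 for every a ∈ A}`. -/
def omegaPerp {V : Type*} [AddCommGroup V] [Module ℝ V]
    (ω : V →ₗ[ℝ] V →ₗ[ℝ] ℝ) (A : Submodule ℝ V) : Submodule ℝ V where
  carrier := {v | ∀ a ∈ A, ω v a = 0}
  add_mem' := by
    intro x y hx hy a ha
    simp [map_add, hx a ha, hy a ha]
  zero_mem' := by
    intro a ha
    simp
  smul_mem' := by
    intro c x hx a ha
    simp [map_smul, hx a ha]

open LinearMap (BilinForm)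

namespace LinearMap.BilinForm

theorem ker_le_orthogonal {R M : Type*} [CommRing R] [AddCommGroup M] [Module R M]
    {B : BilinForm R M} (hB : B.IsRefl) (N : Submodule R M) : LinearMap.ker B ≤ B.orthogonal N :=
  fun v hv n _ ↦ hB v n (by rw [LinearMap.mem_ker.mp hv, LinearMap.zero_apply])

variable {K V : Type*} [Field K] [AddCommGroup V] [Module K V] [FiniteDimensional K V]
  {B : BilinForm K V}

theorem orthogonal_orthogonal_eq_sup_ker (hB : B.IsRefl) (N : Submodule K V) :
    B.orthogonal (B.orthogonal N) = N ⊔ LinearMap.ker B := by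
  have hle : N ⊔ LinearMap.ker B ≤ B.orthogonal (B.orthogonal N) :=
    sup_le (le_orthogonal_orthogonal hB) (ker_le_orthogonal hB _)
  refine (Submodule.eq_of_le_of_finrank_le hle ?_).symm
  have hN := finrank_add_finrank_orthogonal' (B := B) N
  have hNperp := finrank_add_finrank_orthogonal' (B := B) (B.orthogonal N)
  rw [inf_eq_right.mpr (ker_le_orthogonal hB N)] at hNperp
  have hsup := Submodule.finrank_sup_add_finrank_inf_eq N (LinearMap.ker B)
  omega

theorem orthogonal_inf_orthogonal_orthogonal (hB : B.IsRefl) (N : Submodule K V) :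
    B.orthogonal N ⊓ B.orthogonal (B.orthogonal N) =
      (N ⊓ B.orthogonal N) ⊔ LinearMap.ker B := by
  rw [orthogonal_orthogonal_eq_sup_ker hB, inf_comm, sup_comm N,
    sup_inf_assoc_of_le _ (ker_le_orthogonal hB N), sup_comm]

end LinearMap.BilinForm

theorem omegaPerp_eq_orthogonal {V : Type*} [AddCommGroup V] [Module ℝ V]
    {ω : BilinForm ℝ V} (hω : ω.IsRefl) (A : Submodule ℝ V) :
    omegaPerp ω A = ω.orthogonal A := by
  ext v
  exact ⟨fun h a ha ↦ hω v a (h a ha), fun h a ha ↦ hω a v (h a ha)⟩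

theorem radical_perp_eq_general {V : Type*} [AddCommGroup V] [Module ℝ V]
    [FiniteDimensional ℝ V]
    (ω : V →ₗ[ℝ] V →ₗ[ℝ] ℝ) (halt : ∀ x, ω x x = 0)
    (R : V) (hker : LinearMap.ker ω = Submodule.span ℝ {R})
    (B : Submodule ℝ V) (hRB : R ∉ B) :
    omegaPerp ω B ⊓ omegaPerp ω (omegaPerp ω B) =
        (B ⊓ omegaPerp ω B) ⊔ Submodule.span ℝ {R} ∧
      Disjoint (B ⊓ omegaPerp ω B) (Submodule.span ℝ {R}) := by
  have hrefl : ω.IsRefl := LinearMap.IsAlt.isRefl halt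
  simp only [omegaPerp_eq_orthogonal hrefl]
  refine ⟨by rw [LinearMap.BilinForm.orthogonal_inf_orthogonal_orthogonal hrefl, hker], ?_⟩
  exact (Submodule.disjoint_span_singleton_of_notMem hRB).mono_left inf_le_left

/-- If B is a subspace of V with R ∉ B, then
B^⊥ ∩ (B^⊥)^⊥ = (B ∩ B^⊥) ⊕ span{R} (an internal direct sum). -/
theorem radical_perp_eq {n : ℕ} {V : Type*} [AddCommGroup V] [Module ℝ V]
    [FiniteDimensional ℝ V] (hdim : Module.finrank ℝ V = 2 * n + 1)
    (ω : V →ₗ[ℝ] V →ₗ[ℝ] ℝ) (halt : ∀ x, ω x x = 0)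
    (R : V) (hR : R ≠ 0) (hker : LinearMap.ker ω = Submodule.span ℝ {R})
    (B : Submodule ℝ V) (hRB : R ∉ B) :
    omegaPerp ω B ⊓ omegaPerp ω (omegaPerp ω B) =
        (B ⊓ omegaPerp ω B) ⊔ Submodule.span ℝ {R} ∧
      Disjoint (B ⊓ omegaPerp ω B) (Submodule.span ℝ {R}) :=
  radical_perp_eq_general ω halt R hker B hRB
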